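/- arXiv:1211.5633 — 5 statements merged into one kernel-verified Lean document; each statement's English description precedes it below -/
import Mathlib

section
/- Let f = (f_1, …, f_n) : {0,1}^n → {0,1}^n be a Boolean network and suppose f_n = w_1 ∧ ⋯ ∧ w_r, where each w_j : {0,1}^n → {0,1} is a clause, i.e. a disjunction of literals (each literal being a variable x_l or its negation ¬x_l). Define the Boolean network k = (k_1, …, k_{n+r}) : {0,1}^{n+r} → {0,1}^{n+r} in variables (x_1, …, x_n, y_1, …, y_r) by k_i(x,y) = f_i(x) for i = 1, …, n−1, k_n(x,y) = ¬y_1 ∧ ¬y_2 ∧ ⋯ ∧ ¬y_r, and k_{n+j}(x,y) = ¬w_j(x) for j = 1, …, r. Then the map φ(x) = (x, ¬w_1(x), …, ¬w_r(x)) restricts to a bijection from the set {x : f(x) = x} of fixed points of f onto the set {(x,y) : k(x,y) = (x,y)} of fixed points of k. -/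
/-!
A fixed point `(x, y)` of `k` must have `y = (¬w_j(x))_j`, and on that graph the new last
coordinate `¬y_1 ∧ ⋯ ∧ ¬y_r` equals `w_1(x) ∧ ⋯ ∧ w_r(x) = f_n(x)`, so `k` acts there as `f`.
Hence the fixed points of `k` are exactly the images of those of `f`.
-/

/-- A clause: a disjunction of literals, i.e. there are sets `Sp`, `Sn` of indices with
`w x = ⋁_{j∈Sp} x j ∨ ⋁_{j∈Sn} ¬ x j`. -/
def IsClause {m : ℕ} (w : (Fin m → Bool) → Bool) : Prop :=
  ∃ Sp Sn : Finset (Fin m),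
    ∀ x, w x = decide ((∃ j ∈ Sp, x j = true) ∨ (∃ j ∈ Sn, x j = false))

/-- The Boolean network `k = (k_1, …, k_{n+r})` in variables `(x, y)` defined by
`k_i(x,y) = f_i(x)` for `i ≠ n` (the last `x`-coordinate),
`k_n(x,y) = ¬y_1 ∧ ⋯ ∧ ¬y_r`, and `k_{n+j}(x,y) = ¬ w_j(x)`. -/
def kNet {n r : ℕ} (f : (Fin (n + 1) → Bool) → Fin (n + 1) → Bool)
    (w : Fin r → (Fin (n + 1) → Bool) → Bool) :
    (Fin (n + 1) → Bool) × (Fin r → Bool) → (Fin (n + 1) → Bool) × (Fin r → Bool) :=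
  fun p =>
    (fun i => if i = Fin.last n then decide (∀ j, p.2 j = false) else f p.1 i,
     fun j => !(w j p.1))

section kNet

variable {n r : ℕ} {f : (Fin (n + 1) → Bool) → Fin (n + 1) → Bool}
  {w : Fin r → (Fin (n + 1) → Bool) → Bool}

theorem kNet_mk_not (hfn : ∀ x, f x (Fin.last n) = decide (∀ j, w j x = true))
    (x : Fin (n + 1) → Bool) :
    kNet f w (x, fun j => !(w j x)) = (f x, fun j => !(w j x)) := by
  refine Prod.ext (funext fun i => ?_) rfl
  by_cases hi : i = Fin.last n
  · subst hi
    simp [kNet, hfn]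
  · simp [kNet, hi]

theorem kNet_eq_self_iff (hfn : ∀ x, f x (Fin.last n) = decide (∀ j, w j x = true))
    {x : Fin (n + 1) → Bool} {y : Fin r → Bool} :
    kNet f w (x, y) = (x, y) ↔ f x = x ∧ y = fun j => !(w j x) := by
  constructor
  · intro hk
    have hy : y = fun j => !(w j x) := (congrArg Prod.snd hk).symm
    subst hy
    rw [kNet_mk_not hfn, Prod.mk.injEq] at hk
    exact ⟨hk.1, rfl⟩
  · rintro ⟨hx, rfl⟩
    rw [kNet_mk_not hfn, hx]

theorem setOf_kNet_eq_self (hfn : ∀ x, f x (Fin.last n) = decide (∀ j, w j x = true)) :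
    {p | kNet f w p = p} = (fun x => (x, fun j => !(w j x))) '' {x | f x = x} := by
  ext ⟨x, y⟩
  simp only [Set.mem_ofPred_eq, Set.mem_image, Prod.mk.injEq, kNet_eq_self_iff hfn]
  constructor
  · rintro ⟨hx, rfl⟩
    exact ⟨x, hx, rfl, rfl⟩
  · rintro ⟨x, hx, rfl, rfl⟩
    exact ⟨hx, rfl⟩

end kNet

theorem fixedPoints_bijOn_kNet_general {n r : ℕ}
    (f : (Fin (n + 1) → Bool) → Fin (n + 1) → Bool)
    (w : Fin r → (Fin (n + 1) → Bool) → Bool)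
    (hfn : ∀ x, f x (Fin.last n) = decide (∀ j, w j x = true)) :
    Set.BijOn (fun x => (x, fun j => !(w j x)))
      {x : Fin (n + 1) → Bool | f x = x}
      {p : (Fin (n + 1) → Bool) × (Fin r → Bool) | kNet f w p = p} := by
  rw [setOf_kNet_eq_self hfn]
  exact Set.InjOn.bijOn_image fun _ _ _ _ h => congrArg Prod.fst h

/-- If the last coordinate function of a Boolean network `f` is a conjunction
`f_n = w_1 ∧ ⋯ ∧ w_r` of clauses, then `φ(x) = (x, ¬w_1(x), …, ¬w_r(x))` restricts to a
bijection from the fixed points of `f` onto the fixed points of the network `k`. -/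
theorem fixedPoints_bijOn_kNet {n r : ℕ}
    (f : (Fin (n + 1) → Bool) → Fin (n + 1) → Bool)
    (w : Fin r → (Fin (n + 1) → Bool) → Bool)
    (hw : ∀ j, IsClause (w j))
    (hfn : ∀ x, f x (Fin.last n) = decide (∀ j, w j x = true)) :
    Set.BijOn (fun x => (x, fun j => !(w j x)))
      {x : Fin (n + 1) → Bool | f x = x}
      {p : (Fin (n + 1) → Bool) × (Fin r → Bool) | kNet f w p = p} :=
  fixedPoints_bijOn_kNet_general f w hfn
end

section
/- Let f : {0,1}^n → {0,1}^n be an AND-NOT network with wiring diagram W, and suppose J ⊆ {1,…,n} intersects every strong positive feedback loop of W. Then the projection x ↦ x|_J (restriction of x to the coordinates in J) is injective on the set of steady states of f; that is, any two distinct steady states a ≠ b of f satisfy a_i ≠ b_i for some i ∈ J. -/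
/-- The AND-NOT network determined by its wiring diagram: node `i` has positive
regulators `P i` and negative regulators `N i`, and coordinate function
`f_i(x) = ⋀_{j∈P i} x j ∧ ⋀_{j∈N i} ¬ x j`. -/
def andNotNet {n : ℕ} (P N : Fin n → Finset (Fin n)) :
    (Fin n → Bool) → Fin n → Bool :=
  fun x i => decide ((∀ j ∈ P i, x j = true) ∧ (∀ j ∈ N i, x j = false))

/-- The data of a directed cycle through distinct vertices of a signed directed graph
on vertices `Fin n`: a list of distinct vertices `vert 0, …, vert len` together with a
sign (`true` = positive) for each edge `vert i → vert (i+1)` (indices mod `len+1`). -/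
structure CycleData (n : ℕ) where
  len : ℕ
  vert : Fin (len + 1) → Fin n
  inj : Function.Injective vert
  sign : Fin (len + 1) → Bool

/-- Membership of a vertex in a cycle. -/
def CycleData.Mem {n : ℕ} (C : CycleData n) (v : Fin n) : Prop :=
  ∃ i, C.vert i = v

/-- `(a, b, s)` is an edge of the cycle `C`. -/
def CycleData.EdgeOf {n : ℕ} (C : CycleData n) (a b : Fin n) (s : Bool) : Prop :=
  ∃ i, C.vert i = a ∧ C.vert (i + 1) = b ∧ C.sign i = s

/-- `C` is a feedback loop of the signed graph with positive edge relation `pos`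
and negative edge relation `neg` (an edge `(j,i,+)` is `pos j i`). -/
def CycleData.IsLoopOf {n : ℕ} (C : CycleData n)
    (pos neg : Fin n → Fin n → Prop) : Prop :=
  ∀ i, if C.sign i then pos (C.vert i) (C.vert (i + 1))
       else neg (C.vert i) (C.vert (i + 1))

/-- A feedback loop is positive when the product of its signs is positive, i.e. it has
an even number of negative edges. -/
def CycleData.IsPositive {n : ℕ} (C : CycleData n) : Prop :=
  (Finset.univ.filter fun i => C.sign i = false).card % 2 = 0

/-- A feedback loop `C` is strong when no vertex `k` sends, via a positive edge `k→i`
and a negative edge `k⊸j` not belonging to `C`, edges into vertices `i, j ∈ C`. -/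
def CycleData.IsStrong {n : ℕ} (C : CycleData n)
    (pos neg : Fin n → Fin n → Prop) : Prop :=
  ¬ ∃ k i j, C.Mem i ∧ C.Mem j ∧ pos k i ∧ neg k j ∧
      ¬ C.EdgeOf k i true ∧ ¬ C.EdgeOf k j false

/-!
Let `a ≠ b` be steady states and colour the set `D` of coordinates where they differ by `a`.
Every `i ∈ D` has a regulator in `D`: in the state where `i` is off, some regulator of `i` takes
the opposite of the value it is forced to take in the state where `i` is on. Inside `D` positive
edges join vertices of equal colour and negative edges vertices of different colours, so every
cycle in `D` is positive, and a vertex outside `D` cannot regulate `D` both positively and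
negatively, since it would have to be on and off in the same state. A combinatorial lemma on
two-coloured digraphs in which every vertex has an in-edge then gives a cycle in `D` into which
no vertex has off-cycle edges towards both a vertex of its own colour and one of the other
colour. This cycle is a strong positive feedback loop, hence meets `J`, where `a` and `b` differ.
-/

open Finset Function

section Cycle

variable {α : Type*}

theorem Set.Finite.exists_mem_periodicPts_of_mapsTo {s : Set α} (hs : s.Finite) {f : α → α}
    (hf : Set.MapsTo f s s) {x : α} (hx : x ∈ s) : ∃ y ∈ s, y ∈ periodicPts f := by
  obtain ⟨i, j, hij, heq⟩ :=
    hs.exists_lt_map_eq_of_forall_mem (f := fun k => f^[k] x) fun k => hf.iterate k hx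
  refine ⟨f^[i] x, hf.iterate i hx, mk_mem_periodicPts (Nat.sub_pos_of_lt hij) ?_⟩
  change f^[j - i] (f^[i] x) = f^[i] x
  rw [← iterate_add_apply, Nat.sub_add_cancel hij.le]
  exact heq.symm

theorem Finset.exists_cycle_of_forall_exists_rel {r : α → α → Prop} {S : Finset α}
    (hS : S.Nonempty) (h : ∀ x ∈ S, ∃ y ∈ S, r x y) :
    ∃ (m : ℕ) (v : Fin (m + 1) → α), Injective v ∧ ∀ t, r (v t) (v (t + 1)) := by
  obtain ⟨x, hx⟩ := hS
  choose! f hfS hfr using h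
  have hmaps : Set.MapsTo f S S := hfS
  obtain ⟨y, hyS, hy⟩ := S.finite_toSet.exists_mem_periodicPts_of_mapsTo hmaps hx
  obtain ⟨m, hm⟩ := Nat.exists_eq_add_one.2 (minimalPeriod_pos_of_mem_periodicPts hy)
  refine ⟨m, fun t => f^[t] y, fun s t hst => Fin.ext ?_, fun t => ?_⟩
  · exact iterate_injOn_Iio_minimalPeriod (by simpa [hm] using s.isLt)
      (by simpa [hm] using t.isLt) hst
  · have hstep : f^[(t + 1 : Fin (m + 1))] y = f (f^[t] y) := by
      have hmod := iterate_mod_minimalPeriod_eq (f := f) (x := y) (n := t + 1)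
      rw [hm] at hmod
      rw [Fin.val_add, Fin.val_one', Nat.add_mod_mod, hmod, iterate_succ_apply']
    simpa only [hstep] using hfr _ (hmaps.iterate t hyS)

end Cycle

section ForkFreeCycle

variable {α : Type*} {σ : α → Bool} {E : Finset (α × α)} {m : ℕ}
  {v : Fin (m + 1) → α}

/-- A vertex `k` with off-cycle edges into the cycle `v` (the cycle edge into `v i` comes from
`v (i - 1)`) towards a vertex of its own colour and towards one of the other colour. -/
def HasFork (σ : α → Bool) (E : Finset (α × α)) (v : Fin (m + 1) → α) : Prop :=
  ∃ k i j, (k, v i) ∈ E ∧ k ≠ v (i - 1) ∧ σ k = σ (v i) ∧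
    (k, v j) ∈ E ∧ k ≠ v (j - 1) ∧ σ k ≠ σ (v j)

theorem not_subsingleton_of_off_cycle_edge (hv : ∀ t, (v t, v (t + 1)) ∈ E) {k : α}
    {i : Fin (m + 1)} (hk : (k, v i) ∈ E) (hki : k ≠ v (i - 1)) :
    ¬ {u | (u, v i) ∈ E}.Subsingleton :=
  fun h => hki (h hk (by simpa using hv (i - 1)))

theorem HasFork.filter_snd_ne [DecidableEq α] {x : α}
    (hv : ∀ t, (v t, v (t + 1)) ∈ E.filter (·.2 ≠ x)) (h : HasFork σ E v) :
    HasFork σ (E.filter (·.2 ≠ x)) v := by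
  have hvx : ∀ t, v t ≠ x := fun t => by simpa using (mem_filter.1 (hv (t - 1))).2
  obtain ⟨k, i, j, hki, hki', hσi, hkj, hkj', hσj⟩ := h
  exact ⟨k, i, j, mem_filter.2 ⟨hki, hvx i⟩, hki', hσi,
    mem_filter.2 ⟨hkj, hvx j⟩, hkj', hσj⟩

theorem HasFork.erase [DecidableEq α] {p w : α}
    (hsafe : ∀ w', (p, w') ∈ E → σ w' ≠ σ w → {u | (u, w') ∈ E}.Subsingleton)
    (hv : ∀ t, (v t, v (t + 1)) ∈ E.erase (p, w)) (h : HasFork σ E v) :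
    HasFork σ (E.erase (p, w)) v := by
  have hvE : ∀ t, (v t, v (t + 1)) ∈ E := fun t => mem_of_mem_erase (hv t)
  obtain ⟨k, i, j, hki, hki', hσi, hkj, hkj', hσj⟩ := h
  have hkp : ∀ {t}, (k, v t) ∈ E → k ≠ v (t - 1) → σ (v t) ≠ σ w → k ≠ p := by
    rintro t hk hkt hσ rfl
    exact not_subsingleton_of_off_cycle_edge hvE hk hkt (hsafe _ hk hσ)
  refine ⟨k, i, j, mem_erase.2 ⟨?_, hki⟩, hki', hσi, mem_erase.2 ⟨?_, hkj⟩, hkj', hσj⟩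
  · intro hpw
    obtain ⟨rfl, rfl⟩ := Prod.mk.inj hpw
    exact hkp hkj hkj' (by rwa [← hσi, ne_comm]) rfl
  · intro hpw
    obtain ⟨rfl, rfl⟩ := Prod.mk.inj hpw
    exact hkp hki hki' (by rwa [← hσi]) rfl

theorem exists_cycle_not_hasFork_of_succ_false_or_subsingleton [DecidableEq α]
    (hE : E.Nonempty)
    (hgood : ∀ e ∈ E, ∃ z, (e.2, z) ∈ E ∧ (σ z = false ∨ {u | (u, z) ∈ E}.Subsingleton)) :
    ∃ (m : ℕ) (v : Fin (m + 1) → α), Injective v ∧ (∀ t, (v t, v (t + 1)) ∈ E) ∧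
      ¬ HasFork σ E v := by
  obtain ⟨m, v, hinj, hv⟩ := exists_cycle_of_forall_exists_rel (hE.image Prod.snd)
    (r := fun x z => (x, z) ∈ E ∧ (σ z = false ∨ {u | (u, z) ∈ E}.Subsingleton)) <| by
      simp only [mem_image]
      rintro _ ⟨e, he, rfl⟩
      obtain ⟨z, hz, hgz⟩ := hgood e he
      exact ⟨z, ⟨_, hz, rfl⟩, hz, hgz⟩
  have hvE : ∀ t, (v t, v (t + 1)) ∈ E := fun t => (hv t).1
  -- off-cycle edges only enter vertices of colour `false`, so no fork can change colour
  have hσ : ∀ {k t}, (k, v t) ∈ E → k ≠ v (t - 1) → σ (v t) = false := fun {_ t} hk hkt => by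
    simpa [not_subsingleton_of_off_cycle_edge hvE hk hkt] using (hv (t - 1)).2
  refine ⟨m, v, hinj, hvE, ?_⟩
  rintro ⟨k, i, j, hki, hki', hσi, hkj, hkj', hσj⟩
  exact hσj (by rw [hσi, hσ hki hki', hσ hkj hkj'])

theorem exists_cycle_not_hasFork [DecidableEq α] (σ : α → Bool) (E : Finset (α × α))
    (hE : E.Nonempty) (hpred : ∀ e ∈ E, ∃ u, (u, e.1) ∈ E) :
    ∃ (m : ℕ) (v : Fin (m + 1) → α), Injective v ∧ (∀ t, (v t, v (t + 1)) ∈ E) ∧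
      ¬ HasFork σ E v := by
  induction E using Finset.strongInduction with
  | H E ih =>
  -- Remove a sink with its in-edges; or remove an edge `p → w` into a vertex with another in-edge
  -- such that every out-neighbour of `p` coloured unlike `w` has a single in-edge, so that a fork
  -- in `E` of a cycle of the smaller graph is already a fork there; if neither is possible, every
  -- vertex has an out-edge to a vertex coloured `false` or with a single in-edge.
  by_cases hsink : ∃ e ∈ E, ∀ w, (e.2, w) ∉ E
  · obtain ⟨⟨u, x⟩, hux, hx⟩ := hsink
    have hxu : u ≠ x := by rintro rfl; exact hx _ hux
    obtain ⟨u', hu'⟩ := hpred _ hux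
    have hpred' : ∀ e ∈ E.filter (·.2 ≠ x), ∃ u, (u, e.1) ∈ E.filter (·.2 ≠ x) := by
      simp only [mem_filter]
      rintro e ⟨he, -⟩
      obtain ⟨u, hu⟩ := hpred e he
      exact ⟨u, hu, fun h => hx e.2 (h ▸ he)⟩
    obtain ⟨m, v, hinj, hv, hfork⟩ :=
      ih _ (filter_ssubset.2 ⟨_, hux, by simp⟩) ⟨_, mem_filter.2 ⟨hu', hxu⟩⟩ hpred'
    exact ⟨m, v, hinj, fun t => (mem_filter.1 (hv t)).1, fun h => hfork (h.filter_snd_ne hv)⟩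
  by_cases hsafe : ∃ p w, (p, w) ∈ E ∧ ¬ {u | (u, w) ∈ E}.Subsingleton ∧
      ∀ w', (p, w') ∈ E → σ w' ≠ σ w → {u | (u, w') ∈ E}.Subsingleton
  · obtain ⟨p, w, hpw, hw, hsafe⟩ := hsafe
    obtain ⟨u', hu', hu'p⟩ := (Set.not_subsingleton_iff.1 hw).exists_ne p
    have hu'E : (u', w) ∈ E.erase (p, w) := mem_erase.2 ⟨by simp [hu'p], hu'⟩
    have hpred' : ∀ e ∈ E.erase (p, w), ∃ u, (u, e.1) ∈ E.erase (p, w) := by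
      rintro ⟨x, y⟩ hxy
      obtain ⟨u, hu⟩ := hpred _ (mem_of_mem_erase hxy)
      by_cases hxw : x = w
      · exact ⟨u', hxw ▸ hu'E⟩
      · exact ⟨u, mem_erase.2 ⟨by simp [hxw], hu⟩⟩
    obtain ⟨m, v, hinj, hv, hfork⟩ := ih _ (erase_ssubset hpw) ⟨_, hu'E⟩ hpred'
    exact ⟨m, v, hinj, fun t => mem_of_mem_erase (hv t), fun h => hfork (h.erase hsafe hv)⟩
  push Not at hsink hsafe
  refine exists_cycle_not_hasFork_of_succ_false_or_subsingleton hE fun e he => ?_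
  obtain ⟨w, hw⟩ := hsink e he
  by_cases hgood : σ w = false ∨ {u | (u, w) ∈ E}.Subsingleton
  · exact ⟨w, hw, hgood⟩
  · push Not at hgood
    obtain ⟨w', hw', hσ, -⟩ := hsafe _ _ hw hgood.2
    exact ⟨w', hw', .inl (by simpa [hgood.1] using hσ)⟩

end ForkFreeCycle

theorem Fin.even_card_filter_ne_add_one {m : ℕ} (g : Fin (m + 1) → Bool) :
    Even #{t | g t ≠ g (t + 1)} := by
  -- mod 2, a sign change at `t` counts as `g t + g (t + 1)`, and both halves sum to `∑ t, g t`
  have hterm : ∀ t, (if g t ≠ g (t + 1) then (1 : ZMod 2) else 0) =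
      ((g t).toNat : ZMod 2) + (g (t + 1)).toNat := by
    intro t
    cases g t <;> cases g (t + 1) <;> decide
  rw [← ZMod.natCast_eq_zero_iff_even, card_filter, Nat.cast_sum]
  simp only [Nat.cast_ite, Nat.cast_one, Nat.cast_zero, hterm, sum_add_distrib]
  have hshift : ∑ t, ((g (t + 1)).toNat : ZMod 2) = ∑ t, ((g t).toNat : ZMod 2) :=
    Fintype.sum_equiv (Equiv.addRight 1) _ _ fun _ => rfl
  rw [hshift, ← two_mul, show (2 : ZMod 2) = 0 from rfl, zero_mul]

namespace CycleData

variable {n m : ℕ}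

def ofColoring (σ : Fin n → Bool) (v : Fin (m + 1) → Fin n) (hv : Injective v) : CycleData n :=
  ⟨m, v, hv, fun t => σ (v t) == σ (v (t + 1))⟩

theorem ofColoring_vert (σ : Fin n → Bool) {v : Fin (m + 1) → Fin n} (hv : Injective v)
    (t : Fin (m + 1)) : (ofColoring σ v hv).vert t = v t :=
  rfl

theorem edgeOf_ofColoring (σ : Fin n → Bool) {v : Fin (m + 1) → Fin n} (hv : Injective v)
    (t : Fin (m + 1)) :
    (ofColoring σ v hv).EdgeOf (v t) (v (t + 1)) (σ (v t) == σ (v (t + 1))) :=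
  ⟨t, rfl, rfl, rfl⟩

theorem ofColoring_isPositive (σ : Fin n → Bool) {v : Fin (m + 1) → Fin n} (hv : Injective v) :
    (ofColoring σ v hv).IsPositive := by
  simp only [IsPositive, ofColoring, beq_eq_false_iff_ne]
  exact Nat.even_iff.1 (Fin.even_card_filter_ne_add_one (σ ∘ v))

end CycleData

section SteadyStates

variable {n : ℕ} {P N : Fin n → Finset (Fin n)} {x y a b : Fin n → Bool} {i j k : Fin n}

theorem andNotNet_eq_true_iff :
    andNotNet P N x i = true ↔ (∀ j ∈ P i, x j = true) ∧ ∀ j ∈ N i, x j = false := by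
  simp [andNotNet]

theorem eq_true_of_mem_pos (hx : andNotNet P N x = x) (hi : x i = true) (hk : k ∈ P i) :
    x k = true :=
  (andNotNet_eq_true_iff.1 (hx ▸ hi)).1 k hk

theorem eq_false_of_mem_neg (hx : andNotNet P N x = x) (hi : x i = true) (hk : k ∈ N i) :
    x k = false :=
  (andNotNet_eq_true_iff.1 (hx ▸ hi)).2 k hk

theorem exists_regulator_ne (hx : andNotNet P N x = x) (hy : andNotNet P N y = y)
    (hxi : x i = true) (hyi : y i = false) : ∃ k, (k ∈ P i ∨ k ∈ N i) ∧ x k ≠ y k := by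
  by_contra! h
  have : andNotNet P N y i = true := andNotNet_eq_true_iff.2
    ⟨fun k hk => h k (.inl hk) ▸ eq_true_of_mem_pos hx hxi hk,
      fun k hk => h k (.inr hk) ▸ eq_false_of_mem_neg hx hxi hk⟩
  simp [hy, hyi] at this

theorem cond_eq_true_of_mem_pos (ha : andNotNet P N a = a) (hb : andNotNet P N b = b)
    (hi : a i ≠ b i) (hk : k ∈ P i) : (bif a i then a k else b k) = true := by
  cases hai : a i
  · exact eq_true_of_mem_pos hb (by simpa [hai] using hi.symm) hk
  · exact eq_true_of_mem_pos ha hai hk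

theorem cond_eq_false_of_mem_neg (ha : andNotNet P N a = a) (hb : andNotNet P N b = b)
    (hi : a i ≠ b i) (hk : k ∈ N i) : (bif a i then a k else b k) = false := by
  cases hai : a i
  · exact eq_false_of_mem_neg hb (by simpa [hai] using hi.symm) hk
  · exact eq_false_of_mem_neg ha hai hk

theorem eq_of_mem_pos_of_ne (ha : andNotNet P N a = a) (hb : andNotNet P N b = b)
    (hk : k ∈ P i) (hi : a i ≠ b i) (hk' : a k ≠ b k) : a k = a i := by
  have := cond_eq_true_of_mem_pos ha hb hi hk
  cases hai : a i <;> simp_all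

theorem ne_of_mem_neg_of_ne (ha : andNotNet P N a = a) (hb : andNotNet P N b = b)
    (hk : k ∈ N i) (hi : a i ≠ b i) (hk' : a k ≠ b k) : a k ≠ a i := by
  have := cond_eq_false_of_mem_neg ha hb hi hk
  cases hai : a i <;> simp_all

theorem ne_of_mem_pos_of_mem_neg (ha : andNotNet P N a = a) (hb : andNotNet P N b = b)
    (hki : k ∈ P i) (hkj : k ∈ N j) (hi : a i ≠ b i) (hj : a j ≠ b j) : a k ≠ b k := by
  intro hk
  have hpos := cond_eq_true_of_mem_pos ha hb hi hki
  have hneg := cond_eq_false_of_mem_neg ha hb hj hkj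
  rw [hk, Bool.cond_self] at hpos hneg
  exact Bool.noConfusion (hpos.symm.trans hneg)

def diffGraph (P N : Fin n → Finset (Fin n)) (a b : Fin n → Bool) : Finset (Fin n × Fin n) :=
  {e | a e.1 ≠ b e.1 ∧ a e.2 ≠ b e.2 ∧ (e.1 ∈ P e.2 ∨ e.1 ∈ N e.2)}

theorem mem_diffGraph :
    (k, i) ∈ diffGraph P N a b ↔ a k ≠ b k ∧ a i ≠ b i ∧ (k ∈ P i ∨ k ∈ N i) := by
  simp [diffGraph]

theorem exists_mem_diffGraph (ha : andNotNet P N a = a) (hb : andNotNet P N b = b)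
    (hi : a i ≠ b i) : ∃ k, (k, i) ∈ diffGraph P N a b := by
  obtain ⟨k, hk, hk'⟩ : ∃ k, (k ∈ P i ∨ k ∈ N i) ∧ a k ≠ b k := by
    cases hai : a i
    · obtain ⟨k, hk, hk'⟩ := exists_regulator_ne hb ha (by simpa [hai] using hi.symm) hai
      exact ⟨k, hk, hk'.symm⟩
    · exact exists_regulator_ne ha hb hai (by simpa [hai] using hi.symm)
  exact ⟨k, mem_diffGraph.2 ⟨hk', hi, hk⟩⟩

variable {m : ℕ} {v : Fin (m + 1) → Fin n}

theorem isLoopOf_ofColoring (ha : andNotNet P N a = a) (hb : andNotNet P N b = b)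
    (hinj : Injective v) (hv : ∀ t, (v t, v (t + 1)) ∈ diffGraph P N a b) :
    (CycleData.ofColoring a v hinj).IsLoopOf (fun j i => j ∈ P i) (fun j i => j ∈ N i) := by
  intro (t : Fin (m + 1))
  obtain ⟨hk, hi, hPN⟩ := mem_diffGraph.1 (hv t)
  show if (a (v t) == a (v (t + 1))) then v t ∈ P (v (t + 1)) else v t ∈ N (v (t + 1))
  rcases hPN with hP | hN
  · rw [if_pos (beq_iff_eq.2 (eq_of_mem_pos_of_ne ha hb hP hi hk))]
    exact hP
  · rw [if_neg (by simpa using ne_of_mem_neg_of_ne ha hb hN hi hk)]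
    exact hN

theorem isStrong_ofColoring (ha : andNotNet P N a = a) (hb : andNotNet P N b = b)
    (hinj : Injective v) (hv : ∀ t, (v t, v (t + 1)) ∈ diffGraph P N a b)
    (hfork : ¬ HasFork a (diffGraph P N a b) v) :
    (CycleData.ofColoring a v hinj).IsStrong (fun j i => j ∈ P i) (fun j i => j ∈ N i) := by
  rintro ⟨k, _, _, ⟨(i : Fin (m + 1)), rfl⟩, ⟨(j : Fin (m + 1)), rfl⟩, hki, hkj, hi, hj⟩
  simp only [CycleData.ofColoring_vert] at hki hkj hi hj
  have hvD : ∀ t, a (v t) ≠ b (v t) := fun t => by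
    simpa using (mem_diffGraph.1 (hv (t - 1))).2.1
  have hkD := ne_of_mem_pos_of_mem_neg ha hb hki hkj (hvD i) (hvD j)
  have hσi := eq_of_mem_pos_of_ne ha hb hki (hvD i) hkD
  have hσj := ne_of_mem_neg_of_ne ha hb hkj (hvD j) hkD
  refine hfork ⟨k, i, j, mem_diffGraph.2 ⟨hkD, hvD i, .inl hki⟩, ?_, hσi,
    mem_diffGraph.2 ⟨hkD, hvD j, .inr hkj⟩, ?_, hσj⟩
  · rintro rfl
    exact hi (by simpa [hσi] using CycleData.edgeOf_ofColoring a hinj (i - 1))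
  · rintro rfl
    exact hj (by
      simpa [beq_eq_false_iff_ne.2 hσj] using CycleData.edgeOf_ofColoring a hinj (j - 1))

end SteadyStates

theorem andNot_steadyStates_proj_injective_general {n : ℕ}
    (P N : Fin n → Finset (Fin n))
    (J : Finset (Fin n))
    (hJ : ∀ C : CycleData n,
      C.IsLoopOf (fun j i => j ∈ P i) (fun j i => j ∈ N i) →
      C.IsPositive →
      C.IsStrong (fun j i => j ∈ P i) (fun j i => j ∈ N i) →
      ∃ v ∈ J, C.Mem v) :
    ∀ a b : Fin n → Bool, andNotNet P N a = a → andNotNet P N b = b →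
      (∀ i ∈ J, a i = b i) → a = b := by
  intro a b ha hb hJab
  by_contra hab
  obtain ⟨i, hi⟩ := Function.ne_iff.1 hab
  obtain ⟨k, hki⟩ := exists_mem_diffGraph ha hb hi
  obtain ⟨m, v, hinj, hv, hfork⟩ := exists_cycle_not_hasFork a (diffGraph P N a b) ⟨_, hki⟩
    fun e he => exists_mem_diffGraph ha hb (mem_diffGraph.1 he).1
  obtain ⟨_, hwJ, t, rfl⟩ := hJ _ (isLoopOf_ofColoring ha hb hinj hv)
    (CycleData.ofColoring_isPositive a hinj) (isStrong_ofColoring ha hb hinj hv hfork)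
  exact (mem_diffGraph.1 (hv t)).1 (hJab _ hwJ)

/-- If `J` intersects every strong positive feedback loop of the wiring diagram of an
AND-NOT network, then the projection onto the coordinates in `J` is injective on the
set of steady states: distinct steady states differ in some coordinate of `J`. -/
theorem andNot_steadyStates_proj_injective {n : ℕ}
    (P N : Fin n → Finset (Fin n)) (hd : ∀ i, Disjoint (P i) (N i))
    (J : Finset (Fin n))
    (hJ : ∀ C : CycleData n,
      C.IsLoopOf (fun j i => j ∈ P i) (fun j i => j ∈ N i) →
      C.IsPositive →
      C.IsStrong (fun j i => j ∈ P i) (fun j i => j ∈ N i) →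
      ∃ v ∈ J, C.Mem v) :
    ∀ a b : Fin n → Bool, andNotNet P N a = a → andNotNet P N b = b →
      (∀ i ∈ J, a i = b i) → a = b :=
  andNot_steadyStates_proj_injective_general P N J hJ
end

section
/- Let f : {0,1}^n → {0,1}^n be an AND-NOT network with wiring diagram W. Then for every x ∈ {0,1}^n, every positive feedback loop of the local interaction graph W(x) is a strong positive feedback loop of W. -/
/-- `x + e_j` / `x − e_j`: flip the `j`-th coordinate of `x`. -/
def flip1 {n : ℕ} (x : Fin n → Bool) (j : Fin n) : Fin n → Bool :=
  Function.update x j (!x j)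

/-- `(j, i, +)` is an edge of the local interaction graph `W(x)` of `f`:
if `x_j = 0` then `f_i(x) < f_i(x + e_j)`, and if `x_j = 1` then
`f_i(x − e_j) < f_i(x)`. -/
def PosLocal {n : ℕ} (f : (Fin n → Bool) → Fin n → Bool) (x : Fin n → Bool)
    (j i : Fin n) : Prop :=
  (x j = false ∧ f x i = false ∧ f (flip1 x j) i = true) ∨
  (x j = true ∧ f (flip1 x j) i = false ∧ f x i = true)

/-- `(j, i, −)` is an edge of the local interaction graph `W(x)` of `f`:
if `x_j = 0` then `f_i(x) > f_i(x + e_j)`, and if `x_j = 1` then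
`f_i(x − e_j) > f_i(x)`. -/
def NegLocal {n : ℕ} (f : (Fin n → Bool) → Fin n → Bool) (x : Fin n → Bool)
    (j i : Fin n) : Prop :=
  (x j = false ∧ f x i = true ∧ f (flip1 x j) i = false) ∨
  (x j = true ∧ f (flip1 x j) i = true ∧ f x i = false)


lemma andNot_true_iff {n : ℕ} (P N : Fin n → Finset (Fin n)) (x : Fin n → Bool) (i : Fin n) :
    andNotNet P N x i = true ↔ (∀ j ∈ P i, x j = true) ∧ (∀ j ∈ N i, x j = false) := by
  simp [andNotNet]

lemma flip_ne {n : ℕ} (x : Fin n → Bool) (u j : Fin n) (h : j ≠ u) : flip1 x u j = x j := by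
  simp [flip1, Function.update_of_ne h]

lemma posLocal_spec {n : ℕ} (P N : Fin n → Finset (Fin n)) (x : Fin n → Bool)
    (u v : Fin n) (h : PosLocal (andNotNet P N) x u v) :
    u ∈ P v ∧ (∀ j ∈ P v, j ≠ u → x j = true) ∧ (∀ j ∈ N v, j ≠ u → x j = false) := by
  rcases h with ⟨hxu, hf, hf'⟩ | ⟨hxu, hf', hf⟩
  · rw [andNot_true_iff] at hf'
    obtain ⟨hP, hN⟩ := hf'
    have hPx : ∀ j ∈ P v, j ≠ u → x j = true := fun j hj hju => by
      rw [← flip_ne x u j hju]; exact hP j hj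
    have hNx : ∀ j ∈ N v, j ≠ u → x j = false := fun j hj hju => by
      rw [← flip_ne x u j hju]; exact hN j hj
    refine ⟨?_, hPx, hNx⟩
    by_contra hu
    have ht : andNotNet P N x v = true := by
      rw [andNot_true_iff]
      refine ⟨fun j hj => hPx j hj (fun e => hu (e ▸ hj)), fun j hj => ?_⟩
      by_cases hju : j = u
      · subst hju; exact hxu
      · exact hNx j hj hju
    rw [hf] at ht; exact Bool.false_ne_true ht
  · rw [andNot_true_iff] at hf
    obtain ⟨hP, hN⟩ := hf
    refine ⟨?_, fun j hj _ => hP j hj, fun j hj _ => hN j hj⟩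
    by_contra hu
    have ht : andNotNet P N (flip1 x u) v = true := by
      rw [andNot_true_iff]
      refine ⟨fun j hj => ?_, fun j hj => ?_⟩
      · have hju : j ≠ u := fun e => hu (e ▸ hj)
        rw [flip_ne x u j hju]; exact hP j hj
      · by_cases hju : j = u
        · subst hju; simp [flip1, hxu]
        · rw [flip_ne x u j hju]; exact hN j hj
    rw [hf'] at ht; exact Bool.false_ne_true ht

lemma negLocal_spec {n : ℕ} (P N : Fin n → Finset (Fin n)) (x : Fin n → Bool)
    (u v : Fin n) (h : NegLocal (andNotNet P N) x u v) :
    u ∈ N v ∧ (∀ j ∈ P v, j ≠ u → x j = true) ∧ (∀ j ∈ N v, j ≠ u → x j = false) := by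
  rcases h with ⟨hxu, hf, hf'⟩ | ⟨hxu, hf', hf⟩
  · rw [andNot_true_iff] at hf
    obtain ⟨hP, hN⟩ := hf
    refine ⟨?_, fun j hj _ => hP j hj, fun j hj _ => hN j hj⟩
    by_contra hu
    have ht : andNotNet P N (flip1 x u) v = true := by
      rw [andNot_true_iff]
      refine ⟨fun j hj => ?_, fun j hj => ?_⟩
      · by_cases hju : j = u
        · subst hju; simp [flip1, hxu]
        · rw [flip_ne x u j hju]; exact hP j hj
      · have hju : j ≠ u := fun e => hu (e ▸ hj)
        rw [flip_ne x u j hju]; exact hN j hj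
    rw [hf'] at ht; exact Bool.false_ne_true ht
  · rw [andNot_true_iff] at hf'
    obtain ⟨hP, hN⟩ := hf'
    have hPx : ∀ j ∈ P v, j ≠ u → x j = true := fun j hj hju => by
      rw [← flip_ne x u j hju]; exact hP j hj
    have hNx : ∀ j ∈ N v, j ≠ u → x j = false := fun j hj hju => by
      rw [← flip_ne x u j hju]; exact hN j hj
    refine ⟨?_, hPx, hNx⟩
    by_contra hu
    have ht : andNotNet P N x v = true := by
      rw [andNot_true_iff]
      refine ⟨fun j hj => ?_, fun j hj => hNx j hj (fun e => hu (e ▸ hj))⟩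
      by_cases hju : j = u
      · subst hju; exact hxu
      · exact hPx j hj hju
    rw [hf] at ht; exact Bool.false_ne_true ht

/-- For an AND-NOT network, every positive feedback loop of the local interaction
graph `W(x)` is a strong positive feedback loop of the wiring diagram `W`. -/
theorem localGraph_posLoop_strong_of_andNot {n : ℕ}
    (P N : Fin n → Finset (Fin n)) (hd : ∀ i, Disjoint (P i) (N i))
    (x : Fin n → Bool) (C : CycleData n)
    (hC : C.IsLoopOf (PosLocal (andNotNet P N) x) (NegLocal (andNotNet P N) x))
    (hpos : C.IsPositive) :
    C.IsLoopOf (fun j i => j ∈ P i) (fun j i => j ∈ N i) ∧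
    C.IsStrong (fun j i => j ∈ P i) (fun j i => j ∈ N i) := by
  constructor
  · intro i
    have h := hC i
    by_cases hs : C.sign i = true
    · rw [if_pos hs] at h ⊢
      exact (posLocal_spec P N x _ _ h).1
    · rw [if_neg hs] at h ⊢
      exact (negLocal_spec P N x _ _ h).1
  · rintro ⟨k, i, j, ⟨a, rfl⟩, ⟨b, rfl⟩, hkP, hkN, hnEi, hnEj⟩
    have hxk_true : x k = true := by
      have h := hC (a - 1)
      have hsucc : a - 1 + 1 = a := sub_add_cancel a 1
      rw [hsucc] at h
      by_cases hke : C.vert (a - 1) = k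
      · by_cases hs : C.sign (a - 1) = true
        · exact absurd ⟨a - 1, hke, by rw [hsucc], hs⟩ hnEi
        · rw [if_neg hs] at h
          have hkN' := (negLocal_spec P N x _ _ h).1
          rw [hke] at hkN'
          exact absurd hkN' (Finset.disjoint_left.mp (hd (C.vert a)) hkP)
      · by_cases hs : C.sign (a - 1) = true
        · rw [if_pos hs] at h
          exact (posLocal_spec P N x _ _ h).2.1 k hkP (fun e => hke e.symm)
        · rw [if_neg hs] at h
          exact (negLocal_spec P N x _ _ h).2.1 k hkP (fun e => hke e.symm)
    have hxk_false : x k = false := by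
      have h := hC (b - 1)
      have hsucc : b - 1 + 1 = b := sub_add_cancel b 1
      rw [hsucc] at h
      by_cases hke : C.vert (b - 1) = k
      · by_cases hs : C.sign (b - 1) = true
        · rw [if_pos hs] at h
          have hkP' := (posLocal_spec P N x _ _ h).1
          rw [hke] at hkP'
          exact absurd hkN (Finset.disjoint_left.mp (hd (C.vert b)) hkP')
        · exact absurd ⟨b - 1, hke, by rw [hsucc],
            Bool.eq_false_iff.mpr hs⟩ hnEj
      · by_cases hs : C.sign (b - 1) = true
        · rw [if_pos hs] at h
          exact (posLocal_spec P N x _ _ h).2.2 k hkN (fun e => hke e.symm)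
        · rw [if_neg hs] at h
          exact (negLocal_spec P N x _ _ h).2.2 k hkN (fun e => hke e.symm)
    rw [hxk_true] at hxk_false
    simp at hxk_false
end

section
/- Let f : {0,1}^n → {0,1}^n be an AND-NOT network with wiring diagram W, and suppose W contains a path of positive edges k→i_1→⋯→i_r→t (with r ≥ 1) from vertex k to vertex t, and that W contains neither the positive edge (k,t,+) nor the negative edge (k,t,−). Let g be the AND-NOT network whose wiring diagram is W together with the additional positive edge (k,t,+) (so g_i = f_i for i ≠ t and g_t = f_t ∧ x_k). Then f and g have exactly the same steady states. -/
section

variable {n : ℕ} {P N : Fin n → Finset (Fin n)} {x : Fin n → Bool} {t : Fin n}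

theorem andNotNet_eq_true_pos {i j : Fin n} (h : andNotNet P N x i = true) (hj : j ∈ P i) :
    x j = true :=
  (of_decide_eq_true h).1 j hj

theorem eq_true_of_transGen_pos (hoff : ∀ b ≠ t, andNotNet P N x b = x b)
    (ht : andNotNet P N x t = true) {a : Fin n}
    (hat : Relation.TransGen (fun a b : Fin n => a ∈ P b) a t) : x a = true := by
  induction hat using Relation.TransGen.head_induction_on with
  | single hat => exact andNotNet_eq_true_pos ht hat
  | @head a b hab _ hb =>
    have hfb : andNotNet P N x b = true := by
      by_cases hbt : b = t
      · rwa [hbt]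
      · rw [hoff b hbt, hb]
    exact andNotNet_eq_true_pos hfb hab

theorem andNotNet_and_eq_of_transGen_pos {k : Fin n} (hoff : ∀ b ≠ t, andNotNet P N x b = x b)
    (hkt : Relation.TransGen (fun a b : Fin n => a ∈ P b) k t) :
    (andNotNet P N x t && x k) = andNotNet P N x t := by
  cases ht : andNotNet P N x t with
  | false => rfl
  | true => rw [eq_true_of_transGen_pos hoff ht hkt, Bool.and_true]

theorem addPosEdge_eq_andNotNet {k : Fin n} (hoff : ∀ b ≠ t, andNotNet P N x b = x b)
    (hkt : Relation.TransGen (fun a b : Fin n => a ∈ P b) k t) :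
    (fun i => if i = t then (andNotNet P N x t && x k) else andNotNet P N x i) =
      andNotNet P N x := by
  funext i
  split_ifs with hi
  · rw [hi, andNotNet_and_eq_of_transGen_pos hoff hkt]
  · rfl

end

theorem andNot_addPosEdge_same_steadyStates_general {n : ℕ}
    (P N : Fin n → Finset (Fin n))
    (k t : Fin n)
    (hpath : ∃ i1 : Fin n, k ∈ P i1 ∧
      Relation.TransGen (fun a b : Fin n => a ∈ P b) i1 t) :
    ∀ x : Fin n → Bool,
      andNotNet P N x = x ↔
      (fun i => if i = t then (andNotNet P N x t && x k) else andNotNet P N x i)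
        = x := by
  obtain ⟨i1, hki1, hi1t⟩ := hpath
  have hkt := Relation.TransGen.head hki1 hi1t
  intro x
  constructor
  · intro hfx
    rwa [addPosEdge_eq_andNotNet (fun b _ => congrFun hfx b) hkt]
  · intro hgx
    have hoff : ∀ b ≠ t, andNotNet P N x b = x b := fun b hb => by
      simpa [hb] using congrFun hgx b
    rwa [addPosEdge_eq_andNotNet hoff hkt] at hgx

/-- If the wiring diagram of an AND-NOT network `f` contains a path of positive edges
`k → i_1 → ⋯ → i_r → t` with `r ≥ 1`, and contains neither the edge `(k,t,+)` nor
`(k,t,−)`, then the AND-NOT network `g` obtained by adding the positive edge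
`(k,t,+)` (so `g_i = f_i` for `i ≠ t` and `g_t = f_t ∧ x_k`) has exactly the same
steady states as `f`. -/
theorem andNot_addPosEdge_same_steadyStates {n : ℕ}
    (P N : Fin n → Finset (Fin n)) (hd : ∀ i, Disjoint (P i) (N i))
    (k t : Fin n)
    (hpath : ∃ i1 : Fin n, k ∈ P i1 ∧
      Relation.TransGen (fun a b : Fin n => a ∈ P b) i1 t)
    (hkP : k ∉ P t) (hkN : k ∉ N t) :
    ∀ x : Fin n → Bool,
      andNotNet P N x = x ↔
      (fun i => if i = t then (andNotNet P N x t && x k) else andNotNet P N x i)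
        = x :=
  andNot_addPosEdge_same_steadyStates_general P N k t hpath
end

section
/- Let f : {0,1}^n → {0,1}^n be an AND-NOT network with wiring diagram W, and suppose W contains a path k→j_1→⋯→j_r⊸u (with r ≥ 1) in which all edges are positive except for the final negative edge from j_r to u, and such that each intermediate vertex j_1, …, j_r has in-degree exactly 1 in W. Suppose also that W contains neither the positive edge (k,u,+) nor the negative edge (k,u,−). Let g be the AND-NOT network whose wiring diagram is W together with the additional negative edge (k,u,−) (so g_i = f_i for i ≠ u and g_u = f_u ∧ ¬x_k). Then f and g have exactly the same steady states. -/
/-- A path `k → j_1 → ⋯ → j_s ⊸ u` whose edges are all positive except for a final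
negative edge, and all of whose intermediate vertices satisfy `d1`
(the in-degree-1 condition). -/
inductive NegPath1 {n : ℕ} (pos neg : Fin n → Fin n → Prop) (d1 : Fin n → Prop) :
    Fin n → Fin n → Prop
  | base {k u : Fin n} : neg k u → NegPath1 pos neg d1 k u
  | step {k j u : Fin n} : pos k j → d1 j → NegPath1 pos neg d1 j u →
      NegPath1 pos neg d1 k u

lemma NegPath1.exists_neg {n : ℕ} {pos neg : Fin n → Fin n → Prop} {d1 : Fin n → Prop}
    {j u : Fin n} (h : NegPath1 pos neg d1 j u) : ∃ m, neg m u := by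
  induction h with
  | base h => exact ⟨_, h⟩
  | step _ _ _ ih => exact ih

lemma regs_of_card_one {n : ℕ} {P N : Fin n → Finset (Fin n)} {j a : Fin n}
    (ha : a ∈ P j) (h : (P j).card + (N j).card = 1) : P j = {a} ∧ N j = ∅ := by
  have hpos : 0 < (P j).card := Finset.card_pos.mpr ⟨a, ha⟩
  have h1 : (P j).card = 1 := by omega
  have h2 : (N j).card = 0 := by omega
  obtain ⟨b, hb⟩ := Finset.card_eq_one.mp h1
  rw [hb] at ha
  simp only [Finset.mem_singleton] at ha
  subst ha
  exact ⟨hb, Finset.card_eq_zero.mp h2⟩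

lemma andNot_singleton {n : ℕ} (P N : Fin n → Finset (Fin n)) (x : Fin n → Bool)
    {j a : Fin n} (hP : P j = {a}) (hN : N j = ∅) :
    andNotNet P N x j = x a := by
  simp [andNotNet, hP, hN]

lemma andNot_false_of_neg {n : ℕ} (P N : Fin n → Finset (Fin n)) (x : Fin n → Bool)
    {u m : Fin n} (hm : m ∈ N u) (hx : x m = true) :
    andNotNet P N x u = false := by
  simp only [andNotNet, decide_eq_false_iff_not]
  rintro ⟨-, hB⟩
  have := hB m hm
  simp [hx] at this

lemma andNot_key {n : ℕ} (P N : Fin n → Finset (Fin n)) (x : Fin n → Bool)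
    {j u : Fin n}
    (hp : NegPath1 (fun a b : Fin n => a ∈ P b) (fun a b : Fin n => a ∈ N b)
        (fun i => (P i).card + (N i).card = 1) j u) :
    (∀ i, i ≠ u → andNotNet P N x i = x i) → x j = true →
      andNotNet P N x u = false := by
  induction hp with
  | base hneg => intro _ hx; exact andNot_false_of_neg P N x hneg hx
  | @step a j' u' hpos hd1 hrest ih =>
    intro hfix hx
    obtain ⟨hPj, hNj⟩ := regs_of_card_one hpos hd1
    have hne : j' ≠ u' := by
      intro h
      obtain ⟨m, hm⟩ := hrest.exists_neg
      subst h
      rw [hNj] at hm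
      exact absurd hm (Finset.notMem_empty m)
    have hxj : x j' = true := by
      rw [← hfix j' hne, andNot_singleton P N x hPj hNj, hx]
    exact ih hfix hxj

/-- If the wiring diagram of an AND-NOT network `f` contains a path
`k → j_1 → ⋯ → j_r ⊸ u` with `r ≥ 1`, all of whose edges are positive except the
final negative edge, such that every intermediate vertex `j_1, …, j_r` has in-degree
exactly 1, and the diagram contains neither the edge `(k,u,+)` nor `(k,u,−)`, then
the AND-NOT network `g` obtained by adding the negative edge `(k,u,−)`
(so `g_i = f_i` for `i ≠ u` and `g_u = f_u ∧ ¬x_k`) has exactly the same steady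
states as `f`. -/
theorem andNot_addNegEdge_same_steadyStates {n : ℕ}
    (P N : Fin n → Finset (Fin n)) (hd : ∀ i, Disjoint (P i) (N i))
    (k u : Fin n)
    (hpath : ∃ j1 : Fin n, k ∈ P j1 ∧ (P j1).card + (N j1).card = 1 ∧
      NegPath1 (fun a b : Fin n => a ∈ P b) (fun a b : Fin n => a ∈ N b)
        (fun i => (P i).card + (N i).card = 1) j1 u)
    (hkP : k ∉ P u) (hkN : k ∉ N u) :
    ∀ x : Fin n → Bool,
      andNotNet P N x = x ↔
      (fun i => if i = u then (andNotNet P N x u && !(x k)) else andNotNet P N x i)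
        = x := by
  intro x
  constructor
  · intro hf
    have hfix : ∀ i, andNotNet P N x i = x i := fun i => congrFun hf i
    funext i
    by_cases hi : i = u
    · rw [if_pos hi, hi]
      cases hk : x k with
      | false => simp [hfix u]
      | true =>
        obtain ⟨j1, hkj1, hd1, hp⟩ := hpath
        obtain ⟨hPj1, hNj1⟩ := regs_of_card_one hkj1 hd1
        have hxj1 : x j1 = true := by
          rw [← hfix j1, andNot_singleton P N x hPj1 hNj1, hk]
        have hfu := andNot_key P N x hp (fun i _ => hfix i) hxj1
        rw [hfu, ← hfix u, hfu]
        simp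
    · simpa [hi] using hfix i
  · intro hg
    have hfix : ∀ i, i ≠ u → andNotNet P N x i = x i := by
      intro i hi
      have := congrFun hg i
      simpa [hi] using this
    have hxu : (andNotNet P N x u && !(x k)) = x u := by
      simpa using congrFun hg u
    funext i
    by_cases hi : i = u
    · rw [hi]
      cases hk : x k with
      | false =>
        rw [← hxu, hk]
        simp
      | true =>
        obtain ⟨j1, hkj1, hd1, hp⟩ := hpath
        obtain ⟨hPj1, hNj1⟩ := regs_of_card_one hkj1 hd1
        have hne1 : j1 ≠ u := fun h => hkP (h ▸ hkj1)
        have hxj1 : x j1 = true := by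
          rw [← hfix j1 hne1, andNot_singleton P N x hPj1 hNj1, hk]
        have hfu := andNot_key P N x hp hfix hxj1
        rw [hfu, ← hxu, hfu]
        simp
    · exact hfix i hi
end
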